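/- arXiv:2305.08361 — 3 statements merged into one kernel-verified Lean document; each statement's English description precedes it below -/
import Mathlib

section
/- (Lemma 2, Lipschitz continuity) The Hamiltonian H(t,z) = −μ ln(∫₀¹ e^{−α²X_t(u)/(4μ(γ+z))} p(u) du) is Lipschitz continuous in z ≥ 0 with Lipschitz constant α²K(1)/(4γ²); i.e., |H(t,z₁) − H(t,z₂)| ≤ (α²K(1)/(4γ²))|z₁ − z₂| for all z₁, z₂ ≥ 0. -/
/-!
Write `J(z) = ∫₀¹ e^{s_z(u)} p(u) du` with exponent `s_z(u) = -α²X(u)/(4μ(γ+z))`. Since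
`0 < X ≤ K`, the exponents at `z₁` and `z₂` differ pointwise by at most
`D = α²K|z₁ - z₂|/(4μγ²)`, so the integrands are within a factor `e^D` of each other and, the
weight `p` being nonnegative, so are `J(z₁)` and `J(z₂)`. Hence `|ln J(z₁) - ln J(z₂)| ≤ D`,
and multiplying by `μ` gives the claim. Both `J(z)` are positive because `s_z ≥ -α²K/(4μγ)`
and `∫ p = 1`.
-/

open MeasureTheory Real

section WeightedExpIntegral

variable {Ω : Type*} [MeasurableSpace Ω] {ν : Measure Ω} {w : Ω → ℝ}

lemma integrable_exp_mul_of_nonpos {t : Ω → ℝ} (hw : Integrable w ν)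
    (ht_meas : AEStronglyMeasurable t ν) (ht : ∀ᵐ x ∂ν, t x ≤ 0) :
    Integrable (fun x => exp (t x) * w x) ν := by
  refine hw.bdd_mul (c := 1) (continuous_exp.comp_aestronglyMeasurable ht_meas) ?_
  filter_upwards [ht] with x hx
  rw [norm_of_nonneg (exp_pos _).le]
  exact exp_le_one_iff.mpr hx

lemma integral_exp_mul_pos {t : Ω → ℝ} {m : ℝ} (hw_nonneg : ∀ᵐ x ∂ν, 0 ≤ w x)
    (hw_pos : 0 < ∫ x, w x ∂ν) (htw : Integrable (fun x => exp (t x) * w x) ν)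
    (hmt : ∀ᵐ x ∂ν, m ≤ t x) :
    0 < ∫ x, exp (t x) * w x ∂ν := by
  have hw : Integrable w ν := .of_integral_ne_zero hw_pos.ne'
  calc 0 < exp m * ∫ x, w x ∂ν := by positivity
    _ = ∫ x, exp m * w x ∂ν := (integral_const_mul _ _).symm
    _ ≤ ∫ x, exp (t x) * w x ∂ν := by
      refine integral_mono_ae (hw.const_mul _) htw ?_
      filter_upwards [hw_nonneg, hmt] with x hwx hmx
      exact mul_le_mul_of_nonneg_right (exp_le_exp.mpr hmx) hwx

lemma integral_exp_mul_le_exp_mul_integral {s t : Ω → ℝ} {D : ℝ}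
    (hw_nonneg : ∀ᵐ x ∂ν, 0 ≤ w x) (hsw : Integrable (fun x => exp (s x) * w x) ν)
    (htw : Integrable (fun x => exp (t x) * w x) ν) (hst : ∀ᵐ x ∂ν, s x ≤ t x + D) :
    ∫ x, exp (s x) * w x ∂ν ≤ exp D * ∫ x, exp (t x) * w x ∂ν := by
  rw [← integral_const_mul]
  refine integral_mono_ae hsw (htw.const_mul _) ?_
  filter_upwards [hw_nonneg, hst] with x hwx hstx
  rw [← mul_assoc, ← exp_add, add_comm D]
  exact mul_le_mul_of_nonneg_right (exp_le_exp.mpr hstx) hwx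

lemma abs_log_integral_exp_mul_sub_le {s t : Ω → ℝ} {D : ℝ}
    (hw_nonneg : ∀ᵐ x ∂ν, 0 ≤ w x) (hsw : Integrable (fun x => exp (s x) * w x) ν)
    (htw : Integrable (fun x => exp (t x) * w x) ν)
    (hs_pos : 0 < ∫ x, exp (s x) * w x ∂ν) (ht_pos : 0 < ∫ x, exp (t x) * w x ∂ν)
    (hst : ∀ᵐ x ∂ν, |s x - t x| ≤ D) :
    |log (∫ x, exp (s x) * w x ∂ν) - log (∫ x, exp (t x) * w x ∂ν)| ≤ D := by
  have hs_le : ∫ x, exp (s x) * w x ∂ν ≤ exp D * ∫ x, exp (t x) * w x ∂ν :=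
    integral_exp_mul_le_exp_mul_integral hw_nonneg hsw htw <| by
      filter_upwards [hst] with x hx
      linarith [(abs_le.mp hx).2]
  have ht_le : ∫ x, exp (t x) * w x ∂ν ≤ exp D * ∫ x, exp (s x) * w x ∂ν :=
    integral_exp_mul_le_exp_mul_integral hw_nonneg htw hsw <| by
      filter_upwards [hst] with x hx
      linarith [(abs_le.mp hx).1]
  have hlog_s := log_le_log hs_pos hs_le
  have hlog_t := log_le_log ht_pos ht_le
  rw [log_mul (exp_ne_zero _) ht_pos.ne', log_exp] at hlog_s
  rw [log_mul (exp_ne_zero _) hs_pos.ne', log_exp] at hlog_t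
  exact abs_le.mpr ⟨by linarith, by linarith⟩

end WeightedExpIntegral

section ExponentBounds

variable {A B M γ : ℝ}

lemma neg_div_le_neg_div_mul_add {z : ℝ} (hA : 0 ≤ A) (hAB : A ≤ B) (hM : 0 < M) (hγ : 0 < γ)
    (hz : 0 ≤ z) : -B / (M * γ) ≤ -A / (M * (γ + z)) := by
  rw [neg_div, neg_div, neg_le_neg_iff]
  exact div_le_div₀ (hA.trans hAB) hAB (by positivity) (by nlinarith)

lemma abs_neg_div_sub_neg_div_le {z₁ z₂ : ℝ} (hA : 0 ≤ A) (hAB : A ≤ B) (hM : 0 < M)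
    (hγ : 0 < γ) (hz₁ : 0 ≤ z₁) (hz₂ : 0 ≤ z₂) :
    |-A / (M * (γ + z₁)) - -A / (M * (γ + z₂))| ≤ B / (M * γ ^ 2) * |z₁ - z₂| := by
  have hγz₁ : 0 < γ + z₁ := by linarith
  have hγz₂ : 0 < γ + z₂ := by linarith
  have hden : 0 < M * ((γ + z₁) * (γ + z₂)) := by positivity
  rw [show -A / (M * (γ + z₁)) - -A / (M * (γ + z₂))
      = A * (z₁ - z₂) / (M * ((γ + z₁) * (γ + z₂))) by field_simp; ring,
    abs_div, abs_mul A, abs_of_nonneg hA, abs_of_pos hden, div_mul_eq_mul_div]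
  have hB : 0 ≤ B := hA.trans hAB
  gcongr
  nlinarith

end ExponentBounds

theorem stmt_6_general (α γ μ K1 : ℝ) (X p : ℝ → ℝ)
    (hγ : 0 < γ) (hμ : 0 < μ)
    (hX : ∀ u ∈ Set.Icc (0:ℝ) 1, 0 < X u ∧ X u ≤ K1)
    (hXmeas : Measurable X)
    (hp_nonneg : ∀ u ∈ Set.Icc (0:ℝ) 1, 0 ≤ p u)
    (hp_int : ∫ u in (0:ℝ)..1, p u = 1) :
    ∀ z1 z2 : ℝ, 0 ≤ z1 → 0 ≤ z2 →
      |(-μ * Real.log (∫ u in (0:ℝ)..1,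
            Real.exp (-(α ^ 2 * X u) / (4 * μ * (γ + z1))) * p u))
        - (-μ * Real.log (∫ u in (0:ℝ)..1,
            Real.exp (-(α ^ 2 * X u) / (4 * μ * (γ + z2))) * p u))|
        ≤ α ^ 2 * K1 / (4 * γ ^ 2) * |z1 - z2| := by
  intro z₁ z₂ hz₁ hz₂
  set ν := volume.restrict (Set.Ioc (0:ℝ) 1)
  set s : ℝ → ℝ → ℝ := fun z u => -(α ^ 2 * X u) / (4 * μ * (γ + z))
  have hAν : ∀ᵐ u ∂ν, 0 ≤ α ^ 2 * X u ∧ α ^ 2 * X u ≤ α ^ 2 * K1 :=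
    (ae_restrict_mem measurableSet_Ioc).mono fun u hu =>
      have hXu := hX u (Set.Ioc_subset_Icc_self hu)
      ⟨mul_nonneg (sq_nonneg α) hXu.1.le, mul_le_mul_of_nonneg_left hXu.2 (sq_nonneg α)⟩
  have hp_nonneg : ∀ᵐ u ∂ν, 0 ≤ p u :=
    (ae_restrict_mem measurableSet_Ioc).mono fun u hu => hp_nonneg u (Set.Ioc_subset_Icc_self hu)
  rw [intervalIntegral.integral_of_le zero_le_one] at hp_int
  have hp : Integrable p ν := .of_integral_ne_zero (by rw [hp_int]; exact one_ne_zero)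
  have hs_integrable (z : ℝ) (hz : 0 ≤ z) : Integrable (fun u => exp (s z u) * p u) ν :=
    integrable_exp_mul_of_nonpos hp (by fun_prop) <| hAν.mono fun u hu =>
      div_nonpos_of_nonpos_of_nonneg (neg_nonpos.mpr hu.1) (by positivity)
  have hs_pos (z : ℝ) (hz : 0 ≤ z) : 0 < ∫ u, exp (s z u) * p u ∂ν :=
    integral_exp_mul_pos hp_nonneg (by rw [hp_int]; exact one_pos) (hs_integrable z hz) <|
      hAν.mono fun u hu => neg_div_le_neg_div_mul_add hu.1 hu.2 (by positivity) hγ hz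
  have hs_close : ∀ᵐ u ∂ν, |s z₁ u - s z₂ u| ≤ α ^ 2 * K1 / (4 * μ * γ ^ 2) * |z₁ - z₂| :=
    hAν.mono fun u hu => abs_neg_div_sub_neg_div_le hu.1 hu.2 (by positivity) hγ hz₁ hz₂
  have hlog := abs_log_integral_exp_mul_sub_le hp_nonneg (hs_integrable z₁ hz₁)
    (hs_integrable z₂ hz₂) (hs_pos z₁ hz₁) (hs_pos z₂ hz₂) hs_close
  rw [intervalIntegral.integral_of_le zero_le_one, intervalIntegral.integral_of_le zero_le_one,
    ← mul_sub, abs_mul, abs_neg, abs_of_pos hμ]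
  calc μ * |log (∫ u, exp (s z₁ u) * p u ∂ν) - log (∫ u, exp (s z₂ u) * p u ∂ν)|
      ≤ μ * (α ^ 2 * K1 / (4 * μ * γ ^ 2) * |z₁ - z₂|) := by gcongr
    _ = α ^ 2 * K1 / (4 * γ ^ 2) * |z₁ - z₂| := by field_simp

/-- (Lemma 2, Lipschitz continuity) The Hamiltonian
`H(z) = −μ ln(∫₀¹ e^{−α²X_t(u)/(4μ(γ+z))} p(u) du)` is Lipschitz in `z ≥ 0` with
constant `α²K(1)/(4γ²)`. -/
theorem stmt_6 (α γ μ K1 : ℝ) (X p : ℝ → ℝ)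
    (hα : 0 < α) (hγ : 0 < γ) (hμ : 0 < μ) (hK1 : 0 < K1)
    (hX : ∀ u ∈ Set.Icc (0:ℝ) 1, 0 < X u ∧ X u ≤ K1)
    (hXmeas : Measurable X)
    (hpmeas : Measurable p)
    (hp_nonneg : ∀ u ∈ Set.Icc (0:ℝ) 1, 0 ≤ p u)
    (hp_int : ∫ u in (0:ℝ)..1, p u = 1) :
    ∀ z1 z2 : ℝ, 0 ≤ z1 → 0 ≤ z2 →
      |(-μ * Real.log (∫ u in (0:ℝ)..1,
            Real.exp (-(α ^ 2 * X u) / (4 * μ * (γ + z1))) * p u))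
        - (-μ * Real.log (∫ u in (0:ℝ)..1,
            Real.exp (-(α ^ 2 * X u) / (4 * μ * (γ + z2))) * p u))|
        ≤ α ^ 2 * K1 / (4 * γ ^ 2) * |z1 - z2| :=
  stmt_6_general α γ μ K1 X p hγ hμ hX hXmeas hp_nonneg hp_int
end

section
/- (Proposition 4, discrete non-negativity/stability) Consider the explicit finite difference scheme Φ_{i,j} = Φ_{i+1,j} − R(jΔn)jΔn (Δt/Δn)(Φ_{i+1,j} − Φ_{i+1,j−1}) + H̃(iΔt, (Φ_{i+1,j} − Φ_{i+1,j−1})/Δn)Δt with Φ_{i,0} = 0 and Φ_{I,j} = h(jΔn) ≥ 0. If 0 < Δt ≤ Δn (R(M)M + α²K(1)/(4γ²))^{−1}, then Φ_{i,j} ≥ 0 for all 0 ≤ i ≤ I, 0 ≤ j ≤ J. -/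
/-!
Backward induction in time. One step of the scheme maps two nonnegative neighbouring values
`a = Φ_{i+1,j}`, `b = Φ_{i+1,j-1}` to a value at least `min a b`. If `a < b`, both the upwind
transport term and `H̃` (decreasing, with `H̃(t,0) ≥ 0`) are nonnegative. If `a ≥ b`, the Lipschitz
bound gives `H̃ ≥ -L (a - b)/Δn`, and the CFL condition turns the step into `a - λ (a - b)` with
`λ ≤ 1`, which is at least `b`.
-/

theorem mul_le_of_le_mul_inv {Δt Δn S : ℝ} (hΔn : 0 ≤ Δn) (hΔt : 0 ≤ Δt)
    (h : Δt ≤ Δn * S⁻¹) : S * Δt ≤ Δn := by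
  rcases le_or_gt S 0 with hS | hS
  · exact (mul_nonpos_of_nonpos_of_nonneg hS hΔt).trans hΔn
  · rw [← div_eq_mul_inv, le_div_iff₀ hS] at h
    linarith

theorem mul_self_le_of_monotoneOn {R : ℝ → ℝ} {x M : ℝ} (hR_mono : MonotoneOn R (Set.Icc 0 M))
    (hRM : 0 ≤ R M) (hx : x ∈ Set.Icc 0 M) : R x * x ≤ R M * M :=
  mul_le_mul (hR_mono hx ⟨hx.1.trans hx.2, le_rfl⟩ hx.2) hx.2 hx.1 hRM

theorem min_le_upwind_step {g : ℝ → ℝ} {a b c L Δt Δn : ℝ} (hg0 : 0 ≤ g 0) (hg_anti : Antitone g)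
    (hg_lip : ∀ z₁ z₂, |g z₁ - g z₂| ≤ L * |z₁ - z₂|) (hΔn : 0 < Δn) (hΔt : 0 ≤ Δt) (hc : 0 ≤ c)
    (hCFL : (c + L) * Δt ≤ Δn) :
    min a b ≤ a - c * (Δt / Δn) * (a - b) + g ((a - b) / Δn) * Δt := by
  rcases le_or_gt b a with hba | hab
  · have hz : 0 ≤ (a - b) / Δn := div_nonneg (sub_nonneg.2 hba) hΔn.le
    have hg_lower : g 0 - L * ((a - b) / Δn) ≤ g ((a - b) / Δn) := by
      have := hg_lip ((a - b) / Δn) 0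
      rw [sub_zero, abs_of_nonneg hz] at this
      linarith [(abs_sub_le_iff.1 this).2]
    have hcontract : (c + L) * Δt / Δn * (a - b) ≤ a - b :=
      mul_le_of_le_one_left (sub_nonneg.2 hba) ((div_le_one hΔn).2 hCFL)
    calc min a b ≤ b := min_le_right a b
      _ = a - (a - b) := by ring
      _ ≤ a - (c + L) * Δt / Δn * (a - b) := by linarith
      _ = a - c * (Δt / Δn) * (a - b) + (0 - L * ((a - b) / Δn)) * Δt := by
        field_simp
        ring
      _ ≤ a - c * (Δt / Δn) * (a - b) + g ((a - b) / Δn) * Δt := by gcongr; linarith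
  · have hg : 0 ≤ g ((a - b) / Δn) :=
      hg0.trans (hg_anti (div_nonpos_of_nonpos_of_nonneg (by linarith) hΔn.le))
    have htransport : c * (Δt / Δn) * (a - b) ≤ 0 :=
      mul_nonpos_of_nonneg_of_nonpos (by positivity) (by linarith)
    have := mul_nonneg hg hΔt
    linarith [min_le_left a b]

theorem stmt_12_general (I J : ℕ) (Δt Δn M α γ K1 : ℝ) (R h : ℝ → ℝ) (Htil : ℝ → ℝ → ℝ)
    (Φ : ℕ → ℕ → ℝ)
    (hΔn : 0 < Δn)
    (hJM : (J : ℝ) * Δn = M)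
    (hR_nonneg : ∀ x, 0 ≤ R x) (hR_mono : MonotoneOn R (Set.Icc 0 M))
    -- H̃(t,0) ≥ 0, H̃ decreasing in z, Lipschitz in z with constant α²K(1)/(4γ²)
    (hH0 : ∀ t, 0 ≤ Htil t 0)
    (hH_anti : ∀ t, Antitone (Htil t))
    (hH_lip : ∀ t z1 z2, |Htil t z1 - Htil t z2| ≤ α ^ 2 * K1 / (4 * γ ^ 2) * |z1 - z2|)
    -- boundary and terminal data
    (h_nonneg : ∀ x, 0 ≤ h x)
    (h_term : ∀ j ≤ J, Φ I j = h ((j : ℝ) * Δn))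
    (h_bc : ∀ i ≤ I, Φ i 0 = 0)
    -- scheme
    (h_scheme : ∀ i < I, ∀ j, 1 ≤ j → j ≤ J →
      Φ i j = Φ (i+1) j
        - R ((j : ℝ) * Δn) * ((j : ℝ) * Δn) * (Δt / Δn) * (Φ (i+1) j - Φ (i+1) (j-1))
        + Htil ((i : ℝ) * Δt) ((Φ (i+1) j - Φ (i+1) (j-1)) / Δn) * Δt)
    -- CFL condition
    (hCFL0 : 0 < Δt)
    (hCFL : Δt ≤ Δn * (R M * M + α ^ 2 * K1 / (4 * γ ^ 2))⁻¹) :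
    ∀ i ≤ I, ∀ j ≤ J, 0 ≤ Φ i j := by
  have hCFL' := mul_le_of_le_mul_inv hΔn.le hCFL0.le hCFL
  intro i hi
  induction hi using Nat.decreasingInduction with
  | self => exact fun j hj => (h_term j hj).symm ▸ h_nonneg _
  | of_succ i hiI ih =>
    intro j hj
    rcases Nat.eq_zero_or_pos j with rfl | hj1
    · exact (h_bc i hiI.le).ge
    have hjM : (j : ℝ) * Δn ∈ Set.Icc 0 M :=
      ⟨by positivity, hJM ▸ mul_le_mul_of_nonneg_right (Nat.cast_le.2 hj) hΔn.le⟩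
    have hRj := mul_self_le_of_monotoneOn hR_mono (hR_nonneg M) hjM
    rw [h_scheme i hiI j hj1 hj]
    refine (le_min (ih j hj) (ih (j - 1) (by omega))).trans
      (min_le_upwind_step (hH0 _) (hH_anti _) (hH_lip _) hΔn hCFL0.le
        (mul_nonneg (hR_nonneg _) hjM.1) (hCFL'.trans' ?_))
    gcongr

/-- (Proposition 4, discrete non-negativity/stability) For the explicit finite
difference scheme
`Φ_{i,j} = Φ_{i+1,j} − R(jΔn)jΔn(Δt/Δn)(Φ_{i+1,j}−Φ_{i+1,j−1}) + H̃(iΔt,(Φ_{i+1,j}−Φ_{i+1,j−1})/Δn)Δt`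
with `Φ_{i,0} = 0` and `Φ_{I,j} = h(jΔn) ≥ 0`, the CFL condition
`0 < Δt ≤ Δn(R(M)M + α²K(1)/(4γ²))⁻¹` implies `Φ_{i,j} ≥ 0` for all grid points. -/
theorem stmt_12 (I J : ℕ) (Δt Δn T M α γ K1 : ℝ) (R h : ℝ → ℝ) (Htil : ℝ → ℝ → ℝ)
    (Φ : ℕ → ℕ → ℝ)
    (hΔn : 0 < Δn) (hI : 0 < I) (hJ : 0 < J)
    (hIT : (I : ℝ) * Δt = T) (hJM : (J : ℝ) * Δn = M)
    (hα : 0 < α) (hγ : 0 < γ) (hK1 : 0 < K1)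
    (hR_nonneg : ∀ x, 0 ≤ R x) (hR_mono : MonotoneOn R (Set.Icc 0 M))
    -- H̃(t,0) ≥ 0, H̃ decreasing in z, Lipschitz in z with constant α²K(1)/(4γ²)
    (hH0 : ∀ t, 0 ≤ Htil t 0)
    (hH_anti : ∀ t, Antitone (Htil t))
    (hH_lip : ∀ t z1 z2, |Htil t z1 - Htil t z2| ≤ α ^ 2 * K1 / (4 * γ ^ 2) * |z1 - z2|)
    -- boundary and terminal data
    (h_nonneg : ∀ x, 0 ≤ h x)
    (h_term : ∀ j ≤ J, Φ I j = h ((j : ℝ) * Δn))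
    (h_bc : ∀ i ≤ I, Φ i 0 = 0)
    -- scheme
    (h_scheme : ∀ i < I, ∀ j, 1 ≤ j → j ≤ J →
      Φ i j = Φ (i+1) j
        - R ((j : ℝ) * Δn) * ((j : ℝ) * Δn) * (Δt / Δn) * (Φ (i+1) j - Φ (i+1) (j-1))
        + Htil ((i : ℝ) * Δt) ((Φ (i+1) j - Φ (i+1) (j-1)) / Δn) * Δt)
    -- CFL condition
    (hCFL0 : 0 < Δt)
    (hCFL : Δt ≤ Δn * (R M * M + α ^ 2 * K1 / (4 * γ ^ 2))⁻¹) :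
    ∀ i ≤ I, ∀ j ≤ J, 0 ≤ Φ i j :=
  stmt_12_general I J Δt Δn M α γ K1 R h Htil Φ hΔn hJM hR_nonneg hR_mono hH0 hH_anti hH_lip
    h_nonneg h_term h_bc h_scheme hCFL0 hCFL
end

section
/- (Proposition 5, discrete upper bound) Under the same scheme and CFL condition as in Proposition 4, the numerical solution satisfies Φ_{i,j} ≤ h(M) + (α²T/(4γ))K(1) for all 0 ≤ i ≤ I and 0 ≤ j ≤ J. -/
/-!
A step of the upwind scheme maps a row bounded by `B` to a row bounded by `B + Δt·H(0)`:
under the CFL condition the update is non-decreasing in the two values it reads (the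
Lipschitz bound on `H` absorbs the gradient term), and at the constant row `B` it equals
`B + Δt·H(0)`. Marching back from the terminal row `h(jΔn) ≤ h(M)` over `I` steps adds at
most `IΔt · α²K(1)/(4γ) = T · α²K(1)/(4γ)`.
-/

open Set

lemma apply_mul_le_of_monotoneOn {R : ℝ → ℝ} {x M : ℝ} (hR : MonotoneOn R (Icc 0 M))
    (hRM : 0 ≤ R M) (hx : x ∈ Icc 0 M) : R x * x ≤ R M * M :=
  mul_le_mul (hR hx ⟨hx.1.trans hx.2, le_rfl⟩ hx.2) hx.2 hx.1 hRM

lemma upwind_update_le {H : ℝ → ℝ} {a b B c L C Δt Δn : ℝ} (hH_anti : Antitone H)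
    (hH_lip : ∀ z₁ z₂, |H z₁ - H z₂| ≤ L * |z₁ - z₂|) (hHC : H 0 ≤ C)
    (hc : 0 ≤ c) (hΔn : 0 < Δn) (hΔt : 0 ≤ Δt) (hCFL : (c + L) * Δt ≤ Δn)
    (ha : a ≤ B) (hb : b ≤ B) :
    a - c * (Δt / Δn) * (a - b) + H ((a - b) / Δn) * Δt ≤ B + Δt * C := by
  have hH : H ((a - b) / Δn) ≤ C + L * ((B - a) / Δn) := by
    have hlip := hH_lip ((a - B) / Δn) 0
    rw [sub_zero, abs_div, abs_of_pos hΔn, abs_of_nonpos (sub_nonpos.2 ha), neg_sub] at hlip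
    calc H ((a - b) / Δn) ≤ H ((a - B) / Δn) :=
          hH_anti (div_le_div_of_nonneg_right (by linarith) hΔn.le)
      _ ≤ H 0 + L * ((B - a) / Δn) := by linarith [(abs_le.mp hlip).2]
      _ ≤ C + L * ((B - a) / Δn) := by linarith
  have hd : (c + L) * (Δt / Δn) ≤ 1 := by
    rwa [← mul_div_assoc, div_le_one hΔn]
  have hgrad : c * (Δt / Δn) * (b - a) ≤ c * (Δt / Δn) * (B - a) := by
    gcongr
  calc a - c * (Δt / Δn) * (a - b) + H ((a - b) / Δn) * Δt
      ≤ a + c * (Δt / Δn) * (B - a) + (C + L * ((B - a) / Δn)) * Δt := by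
        linarith [mul_le_mul_of_nonneg_right hH hΔt]
    _ = a + (c + L) * (Δt / Δn) * (B - a) + Δt * C := by ring
    _ ≤ a + (B - a) + Δt * C := by
      linarith [mul_le_mul_of_nonneg_right hd (sub_nonneg.2 ha)]
    _ = B + Δt * C := by ring

lemma le_add_mul_of_backward_step {ι : Type*} {u : ℕ → ι → ℝ} {s : Set ι} {I : ℕ} {B δ : ℝ}
    (hB : 0 ≤ B) (hδ : 0 ≤ δ) (hterm : ∀ j ∈ s, u I j ≤ B)
    (hstep : ∀ i < I, ∀ B', 0 ≤ B' → (∀ j ∈ s, u (i + 1) j ≤ B') → ∀ j ∈ s, u i j ≤ B' + δ) :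
    ∀ i ≤ I, ∀ j ∈ s, u i j ≤ B + (I - i : ℕ) * δ := by
  refine fun i hi => Nat.decreasingInduction
    (motive := fun i _ => ∀ j ∈ s, u i j ≤ B + (I - i : ℕ) * δ) (fun i hi ih j hj => ?_)
    (by simpa using hterm) hi
  calc u i j ≤ B + (I - (i + 1) : ℕ) * δ + δ := hstep i hi _ (by positivity) ih j hj
    _ = B + (I - i : ℕ) * δ := by
      rw [show I - i = I - (i + 1) + 1 by omega]
      push_cast
      ring

theorem stmt_13_general (I J : ℕ) (Δt Δn T M α γ K1 : ℝ) (R h : ℝ → ℝ) (Htil : ℝ → ℝ → ℝ)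
    (Φ : ℕ → ℕ → ℝ)
    (hΔn : 0 < Δn)
    (hIT : (I : ℝ) * Δt = T) (hJM : (J : ℝ) * Δn = M)
    (hR_nonneg : ∀ x, 0 ≤ R x) (hR_mono : MonotoneOn R (Set.Icc 0 M))
    (hH0 : ∀ t, 0 ≤ Htil t 0)
    (hH0ub : ∀ t, Htil t 0 ≤ α ^ 2 * K1 / (4 * γ))
    (hH_anti : ∀ t, Antitone (Htil t))
    (hH_lip : ∀ t z1 z2, |Htil t z1 - Htil t z2| ≤ α ^ 2 * K1 / (4 * γ ^ 2) * |z1 - z2|)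
    (h_nonneg : ∀ x, 0 ≤ h x) (h_mono : Monotone h)
    (h_term : ∀ j ≤ J, Φ I j = h ((j : ℝ) * Δn))
    (h_bc : ∀ i ≤ I, Φ i 0 = 0)
    (h_scheme : ∀ i < I, ∀ j, 1 ≤ j → j ≤ J →
      Φ i j = Φ (i+1) j
        - R ((j : ℝ) * Δn) * ((j : ℝ) * Δn) * (Δt / Δn) * (Φ (i+1) j - Φ (i+1) (j-1))
        + Htil ((i : ℝ) * Δt) ((Φ (i+1) j - Φ (i+1) (j-1)) / Δn) * Δt)
    (hCFL0 : 0 < Δt)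
    (hCFL : Δt ≤ Δn * (R M * M + α ^ 2 * K1 / (4 * γ ^ 2))⁻¹) :
    ∀ i ≤ I, ∀ j ≤ J, Φ i j ≤ h M + α ^ 2 * T / (4 * γ) * K1 := by
  set C := α ^ 2 * K1 / (4 * γ)
  set L := α ^ 2 * K1 / (4 * γ ^ 2)
  have hC : 0 ≤ C := (hH0 0).trans (hH0ub 0)
  have hgrid : ∀ j ≤ J, (j : ℝ) * Δn ∈ Icc 0 M := fun j hj =>
    ⟨by positivity, hJM ▸ by gcongr⟩
  have hCFL' : (R M * M + L) * Δt ≤ Δn := by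
    have hpos : 0 < (R M * M + L)⁻¹ := pos_of_mul_pos_right (hCFL0.trans_le hCFL) hΔn.le
    rwa [← div_eq_mul_inv, le_div_iff₀ (inv_pos.1 hpos), mul_comm] at hCFL
  have hrow : ∀ i < I, ∀ B, 0 ≤ B → (∀ j ≤ J, Φ (i + 1) j ≤ B) →
      ∀ j ≤ J, Φ i j ≤ B + Δt * C := by
    intro i hi B hB hB_row j hj
    rcases j.eq_zero_or_pos with rfl | hj0
    · rw [h_bc i hi.le]; positivity
    rw [h_scheme i hi j hj0 hj]
    have hc := apply_mul_le_of_monotoneOn hR_mono (hR_nonneg M) (hgrid j hj)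
    exact upwind_update_le (hH_anti _) (hH_lip _) (hH0ub _)
      (mul_nonneg (hR_nonneg _) (hgrid j hj).1) hΔn hCFL0.le
      (by linarith [mul_le_mul_of_nonneg_right hc hCFL0.le])
      (hB_row j hj) (hB_row (j - 1) (by omega))
  have hterm : ∀ j ≤ J, Φ I j ≤ h M := fun j hj => h_term j hj ▸ h_mono (hgrid j hj).2
  intro i hi j hj
  calc Φ i j ≤ h M + (I - i : ℕ) * (Δt * C) :=
        le_add_mul_of_backward_step (h_nonneg M) (by positivity) hterm hrow i hi j hj
    _ ≤ h M + I * (Δt * C) := by gcongr; exact Nat.sub_le I i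
    _ = h M + α ^ 2 * T / (4 * γ) * K1 := by rw [← hIT]; ring

/-- (Proposition 5, discrete upper bound) Under the same explicit monotone scheme
and CFL condition as in Proposition 4, with `h` non-decreasing and
`0 ≤ H̃(t,0) ≤ α²K(1)/(4γ)`, the numerical solution satisfies
`Φ_{i,j} ≤ h(M) + (α²T/(4γ))K(1)` for all grid points. -/
theorem stmt_13 (I J : ℕ) (Δt Δn T M α γ K1 : ℝ) (R h : ℝ → ℝ) (Htil : ℝ → ℝ → ℝ)
    (Φ : ℕ → ℕ → ℝ)
    (hΔn : 0 < Δn) (hI : 0 < I) (hJ : 0 < J)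
    (hIT : (I : ℝ) * Δt = T) (hJM : (J : ℝ) * Δn = M)
    (hα : 0 < α) (hγ : 0 < γ) (hK1 : 0 < K1)
    (hR_nonneg : ∀ x, 0 ≤ R x) (hR_mono : MonotoneOn R (Set.Icc 0 M))
    (hH0 : ∀ t, 0 ≤ Htil t 0)
    (hH0ub : ∀ t, Htil t 0 ≤ α ^ 2 * K1 / (4 * γ))
    (hH_anti : ∀ t, Antitone (Htil t))
    (hH_lip : ∀ t z1 z2, |Htil t z1 - Htil t z2| ≤ α ^ 2 * K1 / (4 * γ ^ 2) * |z1 - z2|)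
    (h_nonneg : ∀ x, 0 ≤ h x) (h_mono : Monotone h)
    (h_term : ∀ j ≤ J, Φ I j = h ((j : ℝ) * Δn))
    (h_bc : ∀ i ≤ I, Φ i 0 = 0)
    (h_scheme : ∀ i < I, ∀ j, 1 ≤ j → j ≤ J →
      Φ i j = Φ (i+1) j
        - R ((j : ℝ) * Δn) * ((j : ℝ) * Δn) * (Δt / Δn) * (Φ (i+1) j - Φ (i+1) (j-1))
        + Htil ((i : ℝ) * Δt) ((Φ (i+1) j - Φ (i+1) (j-1)) / Δn) * Δt)
    (hCFL0 : 0 < Δt)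
    (hCFL : Δt ≤ Δn * (R M * M + α ^ 2 * K1 / (4 * γ ^ 2))⁻¹) :
    ∀ i ≤ I, ∀ j ≤ J, Φ i j ≤ h M + α ^ 2 * T / (4 * γ) * K1 :=
  stmt_13_general I J Δt Δn T M α γ K1 R h Htil Φ hΔn hIT hJM hR_nonneg hR_mono hH0 hH0ub hH_anti
    hH_lip h_nonneg h_mono h_term h_bc h_scheme hCFL0 hCFL
end
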